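/- Let N be a positive integer and a ≥ 0. Then Σ_{k=0}^{N-1} P(k+1, N a²) = N a² + N (1 - a²) · P(N, N a²) - (N a²)^N e^{-N a²} / (N-1)!. (This is the expected number of eigenvalues of the complex Ginibre ensemble in the centred disc of radius a.) -/

import Mathlib

open MeasureTheory Real Filter

/-- The lower incomplete gamma function `γ(n,x) = ∫₀^x t^(n-1) e^(-t) dt`. -/
noncomputable def lowGamma (n x : ℝ) : ℝ := ∫ t in (0:ℝ)..x, t ^ (n - 1) * Real.exp (-t)

/-- The regularized lower incomplete gamma function `P(n,x) = γ(n,x)/Γ(n)`. -/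
noncomputable def regP (n x : ℝ) : ℝ := (Real.Gamma n)⁻¹ * lowGamma n x

/-!
At integer order `P(1,x) = 1 - e^{-x}`, and integration by parts gives
`P(k+2,x) = P(k+1,x) - x^{k+1} e^{-x}/(k+1)!`. With these, the increments in `n` of
`x + (n+1-x) P(n+1,x) - x^{n+1} e^{-x}/n!` are exactly `P(n+2,x)`, so this expression equals
`∑_{k ≤ n} P(k+1,x)` for every real `x`; at `x = N a²` one has `N - x = N (1 - a²)`.
-/

lemma lowGamma_natCast_add_one (k : ℕ) (x : ℝ) :
    lowGamma (k + 1) x = ∫ t in (0:ℝ)..x, t ^ k * exp (-t) := by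
  simp only [lowGamma, add_sub_cancel_right, rpow_natCast]

lemma hasDerivAt_neg_exp_neg (t : ℝ) : HasDerivAt (fun t => -exp (-t)) (exp (-t)) t := by
  simpa using (hasDerivAt_neg t).exp.fun_neg

lemma lowGamma_one (x : ℝ) : lowGamma 1 x = 1 - exp (-x) := by
  have h := lowGamma_natCast_add_one 0 x
  simp only [Nat.cast_zero, zero_add, pow_zero, one_mul] at h
  rw [h, intervalIntegral.integral_eq_sub_of_hasDerivAt (fun t _ => hasDerivAt_neg_exp_neg t)
    ((by fun_prop : Continuous fun t : ℝ => exp (-t)).intervalIntegrable _ _)]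
  simp only [neg_zero, exp_zero]
  ring

lemma lowGamma_natCast_add_two (k : ℕ) (x : ℝ) :
    lowGamma (k + 2) x = (k + 1) * lowGamma (k + 1) x - x ^ (k + 1) * exp (-x) := by
  have hk : ((k : ℝ) + 2) = ((k + 1 : ℕ) : ℝ) + 1 := by push_cast; ring
  have hparts := intervalIntegral.integral_mul_deriv_eq_deriv_mul (a := 0) (b := x)
    (fun t _ => by simpa using hasDerivAt_pow (k + 1) t) (fun t _ => hasDerivAt_neg_exp_neg t)
    ((by fun_prop : Continuous fun t : ℝ => ((k + 1 : ℕ) : ℝ) * t ^ k).intervalIntegrable _ _)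
    ((by fun_prop : Continuous fun t : ℝ => exp (-t)).intervalIntegrable _ _)
  rw [hk, lowGamma_natCast_add_one, lowGamma_natCast_add_one, hparts]
  have hpull : ∫ t in (0:ℝ)..x, ((k + 1 : ℕ) : ℝ) * t ^ k * -exp (-t)
      = -((k : ℝ) + 1) * ∫ t in (0:ℝ)..x, t ^ k * exp (-t) := by
    rw [← intervalIntegral.integral_const_mul]
    congr 1 with t
    push_cast
    ring
  rw [hpull, zero_pow k.succ_ne_zero, zero_mul, sub_zero]
  ring

lemma regP_one (x : ℝ) : regP 1 x = 1 - exp (-x) := by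
  rw [regP, Gamma_one, inv_one, one_mul, lowGamma_one]

lemma regP_natCast_add_two (k : ℕ) (x : ℝ) :
    regP (k + 2) x = regP (k + 1) x - x ^ (k + 1) * exp (-x) / (k + 1).factorial := by
  have hΓ₁ : Gamma ((k : ℝ) + 1) = k.factorial := Gamma_nat_eq_factorial k
  have hΓ₂ : Gamma ((k : ℝ) + 2) = (k + 1).factorial := by
    rw [show (k : ℝ) + 2 = ((k + 1 : ℕ) : ℝ) + 1 by push_cast; ring, Gamma_nat_eq_factorial]
  rw [regP, regP, lowGamma_natCast_add_two, hΓ₁, hΓ₂, Nat.factorial_succ]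
  push_cast
  field_simp

lemma sum_regP_natCast_add_one (n : ℕ) (x : ℝ) :
    ∑ k ∈ Finset.range (n + 1), regP (k + 1) x
      = x + (n + 1 - x) * regP (n + 1) x - x ^ (n + 1) * exp (-x) / n.factorial := by
  induction n with
  | zero =>
    simp only [zero_add, Finset.sum_range_one, Nat.cast_zero, Nat.factorial_zero, regP_one]
    ring
  | succ n ih =>
    rw [Finset.sum_range_succ, ih, Nat.cast_add_one, add_assoc (n : ℝ) 1 1, one_add_one_eq_two,
      regP_natCast_add_two, Nat.factorial_succ]
    push_cast
    field_simp
    ring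

theorem expected_number_GinUE (N : ℕ) (hN : 0 < N) (a : ℝ) :
    ∑ k ∈ Finset.range N, regP (k + 1) (N * a ^ 2)
      = N * a ^ 2 + N * (1 - a ^ 2) * regP N (N * a ^ 2)
        - (N * a ^ 2) ^ N * Real.exp (-(N * a ^ 2)) / Nat.factorial (N - 1) := by
  obtain ⟨n, rfl⟩ := Nat.exists_eq_add_one_of_ne_zero hN.ne'
  rw [sum_regP_natCast_add_one, Nat.add_sub_cancel, Nat.cast_add_one]
  ring
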